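/- For every Schröder tree t (a plane rooted tree in which every internal vertex has at least two children), one has bottom(t) ≤ top(t) in the Tamari order; consequently the relation ⊴ on faces of the associahedron K(n) is transitive. -/
import Mathlib


/-- Plane binary trees: a single leaf, or `V₁ ∧ V₂` for plane binary trees `V₁, V₂`. -/
inductive PBT : Type
  | leaf : PBT
  | node : PBT → PBT → PBT

/-- Number of leaves of a plane binary tree. -/
def PBT.leaves : PBT → ℕ
  | .leaf => 1
  | .node a b => a.leaves + b.leaves

/-- `1` if the root is an internal vertex, `0` if it is a leaf. -/
def PBT.isInternal : PBT → ℕ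
  | .leaf => 0
  | .node _ _ => 1

/-- Number of left-leaning internal edges: edges joining an internal vertex to
its left child, that child being internal as well. -/
def PBT.leftE : PBT → ℕ
  | .leaf => 0
  | .node a b => a.leftE + b.leftE + a.isInternal

/-- Number of right-leaning internal edges: edges joining an internal vertex to
its right child, that child being internal as well. -/
def PBT.rightE : PBT → ℕ
  | .leaf => 0
  | .node a b => a.rightE + b.rightE + b.isInternal

/-- One right rotation applied to some subtree: somewhere a subtree
`(a ∧ b) ∧ c` is replaced by `a ∧ (b ∧ c)`. -/
inductive RightRot : PBT → PBT → Prop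
  | rot (a b c : PBT) : RightRot (.node (.node a b) c) (.node a (.node b c))
  | left {a a' : PBT} (b : PBT) : RightRot a a' → RightRot (.node a b) (.node a' b)
  | right (a : PBT) {b b' : PBT} : RightRot b b' → RightRot (.node a b) (.node a b')

/-- The Tamari order: reflexive-transitive closure of right rotation. -/
def Tamari : PBT → PBT → Prop := Relation.ReflTransGen RightRot

mutual
  /-- Schröder trees: plane rooted trees in which every internal vertex has at
  least two children (encoding faces of associahedra). -/
  inductive STree : Type
    | leaf : STree
    | node : SForest → STree
  /-- Lists of at least two Schröder trees (children of an internal vertex). -/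
  inductive SForest : Type
    | two : STree → STree → SForest
    | cons : STree → SForest → SForest
end

mutual
  /-- Number of leaves of a Schröder tree. -/
  def STree.leavesS : STree → ℕ
    | .leaf => 1
    | .node f => f.leavesF
  def SForest.leavesF : SForest → ℕ
    | .two a b => a.leavesS + b.leavesS
    | .cons a f => a.leavesS + f.leavesF
end

mutual
  /-- Number of internal vertices of a Schröder tree. -/
  def STree.vS : STree → ℕ
    | .leaf => 0
    | .node f => 1 + f.vF
  def SForest.vF : SForest → ℕ
    | .two a b => a.vS + b.vS
    | .cons a f => a.vS + f.vF
end

mutual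
  /-- `top t`: the binary tree obtained by recursively replacing each internal
  vertex with children `t₁, …, t_c` by the right comb `t₁ ∧ (t₂ ∧ (… ∧ t_c))`. -/
  def STree.top : STree → PBT
    | .leaf => .leaf
    | .node f => f.topF
  def SForest.topF : SForest → PBT
    | .two a b => .node a.top b.top
    | .cons a f => .node a.top f.topF
end

mutual
  /-- `bottom t`: the binary tree obtained by recursively replacing each internal
  vertex with children `t₁, …, t_c` by the left comb `((…(t₁ ∧ t₂)…) ∧ t_c)`. -/
  def STree.bottom : STree → PBT
    | .leaf => .leaf
    | .node f => f.bottomF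
  def SForest.bottomF : SForest → PBT
    | .two a b => .node a.bottom b.bottom
    | .cons a f => SForest.bottomAux a.bottom f
  def SForest.bottomAux : PBT → SForest → PBT
    | acc, .two a b => .node (.node acc a.bottom) b.bottom
    | acc, .cons a f => SForest.bottomAux (.node acc a.bottom) f
end

theorem tamari_node_left {a a' : PBT} (b : PBT) (h : Tamari a a') :
    Tamari (.node a b) (.node a' b) := by
  induction h with
  | refl => exact .refl
  | tail _ h ih => exact ih.tail (RightRot.left _ h)

theorem tamari_node_right (a : PBT) {b b' : PBT} (h : Tamari b b') :
    Tamari (.node a b) (.node a b') := by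
  induction h with
  | refl => exact .refl
  | tail _ h ih => exact ih.tail (RightRot.right _ h)

mutual
theorem bt_tree : ∀ t : STree, Tamari t.bottom t.top
  | .leaf => .refl
  | .node f => bt_forest f

theorem bt_forest : ∀ f : SForest, Tamari f.bottomF f.topF
  | .two a b =>
    (tamari_node_left _ (bt_tree a)).trans (tamari_node_right _ (bt_tree b))
  | .cons a f =>
    (bt_aux a.bottom f).trans (tamari_node_left _ (bt_tree a))

theorem bt_aux : ∀ (acc : PBT) (f : SForest),
    Tamari (SForest.bottomAux acc f) (.node acc f.topF)
  | acc, .two a b =>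
    (Relation.ReflTransGen.single (RightRot.rot acc a.bottom b.bottom)).trans
      (tamari_node_right acc
        ((tamari_node_left _ (bt_tree a)).trans (tamari_node_right _ (bt_tree b))))
  | acc, .cons a f =>
    ((bt_aux (.node acc a.bottom) f).trans
      (Relation.ReflTransGen.single (RightRot.rot acc a.bottom f.topF))).trans
      (tamari_node_right acc (tamari_node_left _ (bt_tree a)))
end

/-- For every Schröder tree `t` (encoding a face of the associahedron
`K(n)` for `n` its number of leaves), one has `bottom t ≤ top t` in the
Tamari order; consequently, the relation `F ⊴ G ↔ top F ≤ bottom G` on faces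
of `K(n)` is transitive. -/
theorem bottom_le_top_and_faceRel_trans :
    (∀ t : STree, Tamari t.bottom t.top) ∧
    (∀ (n : ℕ) (F G H : STree), F.leavesS = n → G.leavesS = n → H.leavesS = n →
      Tamari F.top G.bottom → Tamari G.top H.bottom → Tamari F.top H.bottom) := by
  refine ⟨bt_tree, fun n F G H _ _ _ h1 h2 => ?_⟩
  exact (h1.trans (bt_tree G)).trans h2
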